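/- arXiv:2206.13286 — 3 statements merged into one kernel-verified Lean document; each statement's English description precedes it below -/
import Mathlib

section
/- There exists a constant C > 0 such that for every x with ‖x‖ ≥ r₀ one has |φ(x) − (m/2 + r₀^{n−2}) · ‖x‖^{2−n}| ≤ C · ‖x‖^{−2(n−2)}. In particular, the coefficient of ‖x‖^{2−n} in the expansion of φ at infinity, which by definition of the expansion (B.1) is the boundary capacity C_{g_m}(Σ_{r₀}, M^n_m(r₀)), equals m/2 + r₀^{n−2}. -/
/-!
With `k = r₀^{n-2}` and `a = ‖x‖^{n-2}`, the potential simplifies to `φ = (k + m/2)/(a + m/2)`,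
so `φ - (k + m/2)/a = -(k + m/2)(m/2)/(a (a + m/2))`. Since `k + m/2 > 0` and `a ≥ k`, the
denominator `a + m/2` stays above a fixed multiple of `a`, which gives the `a⁻²` bound.
-/

/-- The boundary capacity potential of the coordinate sphere `Σ_{r₀}` in the exterior region
of the Riemannian Schwarzschild manifold of mass `m`, in Euclidean coordinates:
`φ(x) = (1 + s₀)(1 + m/(2‖x‖^{n−2}))⁻¹ (r₀/‖x‖)^{n−2}` with `s₀ = m/(2r₀^{n−2})`. -/
noncomputable def schwarzschildPotential (n : ℕ) (r₀ m : ℝ)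
    (x : EuclideanSpace ℝ (Fin n)) : ℝ :=
  (1 + m / (2 * r₀ ^ ((n : ℝ) - 2))) * (1 + m / (2 * ‖x‖ ^ ((n : ℝ) - 2)))⁻¹ *
    (r₀ / ‖x‖) ^ ((n : ℝ) - 2)

open Real

lemma one_add_div_mul_inv_one_add_div_mul_div {k a : ℝ} (hk : k ≠ 0) (ha : a ≠ 0) (m : ℝ) :
    (1 + m / (2 * k)) * (1 + m / (2 * a))⁻¹ * (k / a) = (k + m / 2) / (a + m / 2) := by
  have one_add (t : ℝ) (ht : t ≠ 0) : 1 + m / (2 * t) = (t + m / 2) / t := by field_simp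
  rw [one_add k hk, one_add a ha, inv_div]
  field_simp

lemma min_one_div_mul_le_add {k a : ℝ} (c : ℝ) (hk : 0 < k) (hka : k ≤ a) :
    min 1 ((k + c) / k) * a ≤ a + c := by
  rcases le_total 0 c with hc | hc
  · nlinarith [min_le_left 1 ((k + c) / k), hk.trans_le hka]
  · calc min 1 ((k + c) / k) * a ≤ (k + c) / k * a := by
          gcongr
          · linarith
          · exact min_le_right _ _
      _ = a + c + c * (a - k) / k := by field_simp; ring
      _ ≤ a + c := by
          have : c * (a - k) / k ≤ 0 :=
            div_nonpos_of_nonpos_of_nonneg (mul_nonpos_of_nonpos_of_nonneg hc (by linarith)) hk.le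
          linarith

lemma abs_div_add_sub_div_le {k a c : ℝ} (hk : 0 < k) (hka : k ≤ a) (hkc : 0 < k + c) :
    |(k + c) / (a + c) - (k + c) / a| ≤ (k + c) * |c| / min 1 ((k + c) / k) * (a ^ 2)⁻¹ := by
  have ha : 0 < a := hk.trans_le hka
  have hδ : 0 < min 1 ((k + c) / k) := lt_min one_pos (div_pos hkc hk)
  have hac := min_one_div_mul_le_add c hk hka
  have hac' : 0 < a + c := (mul_pos hδ ha).trans_le hac
  have hdiff : (k + c) / (a + c) - (k + c) / a = -((k + c) * c) / (a * (a + c)) := by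
    field_simp; ring
  rw [hdiff, abs_div, abs_neg, abs_mul, abs_of_pos hkc, abs_of_pos (mul_pos ha hac')]
  calc (k + c) * |c| / (a * (a + c)) ≤ (k + c) * |c| / (a * (min 1 ((k + c) / k) * a)) := by
        gcongr
    _ = (k + c) * |c| / min 1 ((k + c) / k) * (a ^ 2)⁻¹ := by field_simp

lemma schwarzschildPotential_eq (n : ℕ) {r₀ : ℝ} (m : ℝ) (hr₀ : 0 < r₀)
    {x : EuclideanSpace ℝ (Fin n)} (hx : 0 < ‖x‖) :
    schwarzschildPotential n r₀ m x =
      (r₀ ^ ((n : ℝ) - 2) + m / 2) / (‖x‖ ^ ((n : ℝ) - 2) + m / 2) := by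
  rw [schwarzschildPotential, div_rpow hr₀.le hx.le,
    one_add_div_mul_inv_one_add_div_mul_div (rpow_pos_of_pos hr₀ _).ne' (rpow_pos_of_pos hx _).ne']

/-- There exists `C > 0` such that for all `x` with `‖x‖ ≥ r₀`,
`|φ(x) − (m/2 + r₀^{n−2})‖x‖^{2−n}| ≤ C ‖x‖^{−2(n−2)}`; hence the coefficient of `‖x‖^{2−n}`
in the expansion of `φ` at infinity, i.e. the boundary capacity
`C_{g_m}(Σ_{r₀}, M^n_m(r₀))`, equals `m/2 + r₀^{n−2}`. -/
theorem stmt3 (n : ℕ) (hn : 3 ≤ n) (r₀ m : ℝ) (hr₀ : 0 < r₀)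
    (hs₀ : 0 < 1 + m / (2 * r₀ ^ ((n : ℝ) - 2))) :
    ∃ C > (0 : ℝ), ∀ x : EuclideanSpace ℝ (Fin n), r₀ ≤ ‖x‖ →
      |schwarzschildPotential n r₀ m x - (m / 2 + r₀ ^ ((n : ℝ) - 2)) * ‖x‖ ^ ((2 : ℝ) - n)| ≤
        C * ‖x‖ ^ (-(2 * ((n : ℝ) - 2))) := by
  have he : 0 < (n : ℝ) - 2 := by
    have : (3 : ℝ) ≤ n := by exact_mod_cast hn
    linarith
  set k := r₀ ^ ((n : ℝ) - 2)
  have hk : 0 < k := rpow_pos_of_pos hr₀ _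
  have hkm : 0 < k + m / 2 := by
    have := mul_pos hk hs₀
    field_simp at this
    linarith
  -- the `+ 1` keeps `C` positive when `m = 0`
  refine ⟨(k + m / 2) * |m / 2| / min 1 ((k + m / 2) / k) + 1, by positivity, fun x hx => ?_⟩
  have hx₀ : 0 < ‖x‖ := hr₀.trans_le hx
  have hka : k ≤ ‖x‖ ^ ((n : ℝ) - 2) := rpow_le_rpow hr₀.le hx he.le
  have hpow : ‖x‖ ^ ((2 : ℝ) - n) = (‖x‖ ^ ((n : ℝ) - 2))⁻¹ := by
    rw [← rpow_neg hx₀.le, neg_sub]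
  have hpow2 : ‖x‖ ^ (-(2 * ((n : ℝ) - 2))) = ((‖x‖ ^ ((n : ℝ) - 2)) ^ 2)⁻¹ := by
    rw [rpow_neg hx₀.le, mul_comm, rpow_mul hx₀.le, rpow_two]
  rw [schwarzschildPotential_eq n m hr₀ hx₀, hpow, hpow2, add_comm (m / 2), ← div_eq_mul_inv]
  calc _ ≤ (k + m / 2) * |m / 2| / min 1 ((k + m / 2) / k) * ((‖x‖ ^ ((n : ℝ) - 2)) ^ 2)⁻¹ :=
        abs_div_add_sub_div_le hk hka hkm
    _ ≤ _ := by gcongr; linarith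
end

section
/- Let n ≥ 3 be an integer, r₀ > 0 and m ∈ ℝ with 1 + s₀ > 0, where s₀ := m/(2r₀^{n−2}). With D := −((n−2)/r₀)(1+s₀)^{−n/(n−2)}, H := ((n−1)/r₀)(1−s₀)(1+s₀)^{−n/(n−2)} and R := r₀(1+s₀)^{2/(n−2)}, one has −2((n−1)/(n−2)) · D − H = (n−1)/R. Since the first Dirac eigenvalue of a round (n−1)-sphere of radius R is (n−1)/(2R), this identity shows that the exterior Schwarzschild region M^n_m(r₀) attains equality in the eigenvalue estimate λ₁(D_γ) ≥ (1/2)·min_Σ(−2((n−1)/(n−2)) ∂φ/∂ν − H) of Theorem 1.4. -/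
/-!
The capacity term `−2((n−1)/(n−2)) D = 2((n−1)/r₀)(1+s₀)^{−n/(n−2)}` and the mean curvature
combine to `((n−1)/r₀)(1+s₀)^{1−n/(n−2)}`, and `1 − n/(n−2) = −2/(n−2)` is exactly the
exponent of `(1+s₀)` in the area radius.
-/

open Real

lemma mul_rpow_neg_div_sub_two {x : ℝ} (hx : 0 < x) {ν : ℝ} (hν : ν - 2 ≠ 0) :
    x * x ^ (-ν / (ν - 2)) = (x ^ (2 / (ν - 2)))⁻¹ := by
  have hexp : 1 + -ν / (ν - 2) = -(2 / (ν - 2)) := by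
    field_simp
    ring
  rw [← rpow_neg hx.le, ← hexp, rpow_add hx, rpow_one]

lemma capacity_sub_meanCurvature_eq {ν r s c : ℝ} (hν : ν - 2 ≠ 0) (hr : r ≠ 0) :
    -2 * ((ν - 1) / (ν - 2)) * (-((ν - 2) / r) * c) - ((ν - 1) / r) * (1 - s) * c
      = ((ν - 1) / r) * ((1 + s) * c) := by
  field_simp
  ring

theorem stmt5_general (n : ℕ) (hn : 3 ≤ n) (r₀ s₀ D H R : ℝ) (hr₀ : 0 < r₀)
    (hs₀ : 0 < 1 + s₀)
    (hD : D = -(((n : ℝ) - 2) / r₀) * (1 + s₀) ^ (-(n : ℝ) / ((n : ℝ) - 2)))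
    (hH : H = (((n : ℝ) - 1) / r₀) * (1 - s₀) * (1 + s₀) ^ (-(n : ℝ) / ((n : ℝ) - 2)))
    (hR : R = r₀ * (1 + s₀) ^ ((2 : ℝ) / ((n : ℝ) - 2))) :
    -2 * (((n : ℝ) - 1) / ((n : ℝ) - 2)) * D - H = ((n : ℝ) - 1) / R := by
  have hn2 : (n : ℝ) - 2 ≠ 0 := by
    have : (3 : ℝ) ≤ n := by exact_mod_cast hn
    linarith
  rw [hD, hH, hR, capacity_sub_meanCurvature_eq hn2 hr₀.ne', mul_rpow_neg_div_sub_two hs₀ hn2]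
  ring

/-- In the Riemannian Schwarzschild manifold of mass `m`, with `s₀ = m/(2r₀^{n−2})`,
`D = −((n−2)/r₀)(1+s₀)^{−n/(n−2)}` the normal derivative of the boundary capacity potential,
`H = ((n−1)/r₀)(1−s₀)(1+s₀)^{−n/(n−2)}` the mean curvature of `Σ_{r₀}` and
`R = r₀(1+s₀)^{2/(n−2)}` its area radius, one has
`−2((n−1)/(n−2)) D − H = (n−1)/R`: since the first Dirac eigenvalue of a round sphere of
radius `R` is `(n−1)/(2R)`, the Schwarzschild exterior attains equality in Theorem 1.4. -/
theorem stmt5 (n : ℕ) (hn : 3 ≤ n) (r₀ m s₀ D H R : ℝ) (hr₀ : 0 < r₀)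
    (hs₀def : s₀ = m / (2 * r₀ ^ ((n : ℝ) - 2))) (hs₀ : 0 < 1 + s₀)
    (hD : D = -(((n : ℝ) - 2) / r₀) * (1 + s₀) ^ (-(n : ℝ) / ((n : ℝ) - 2)))
    (hH : H = (((n : ℝ) - 1) / r₀) * (1 - s₀) * (1 + s₀) ^ (-(n : ℝ) / ((n : ℝ) - 2)))
    (hR : R = r₀ * (1 + s₀) ^ ((2 : ℝ) / ((n : ℝ) - 2))) :
    -2 * (((n : ℝ) - 1) / ((n : ℝ) - 2)) * D - H = ((n : ℝ) - 1) / R :=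
  stmt5_general n hn r₀ s₀ D H R hr₀ hs₀ hD hH hR
end

section
/- Let n ≥ 3 be an integer, R > 0 and c, L ∈ ℝ. Suppose w : ℝⁿ → ℝ is continuous on the closed exterior region {x : ‖x‖ ≥ R}, is C² with vanishing Laplacian on the open exterior {x : ‖x‖ > R}, satisfies w(x) = c for every x with ‖x‖ = R, and w(x) → L as ‖x‖ → ∞. Then w(x) = L + (c − L) · (R/‖x‖)^{n−2} for every x with ‖x‖ ≥ R. -/
/-- The Laplacian of `f : ℝⁿ → ℝ` at `x`: the trace of the second Fréchet derivative,
computed in the standard orthonormal basis of `EuclideanSpace ℝ (Fin n)`. -/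
noncomputable def laplacian {n : ℕ} (f : EuclideanSpace ℝ (Fin n) → ℝ)
    (x : EuclideanSpace ℝ (Fin n)) : ℝ :=
  ∑ i : Fin n,
    iteratedFDeriv ℝ 2 f x ![EuclideanSpace.single i (1 : ℝ), EuclideanSpace.single i (1 : ℝ)]

section Aux

open Filter Set Topology RealInnerProductSpace

variable {F : Type*} [NormedAddCommGroup F] [InnerProductSpace ℝ F]

/-- 1D second derivative test at a local max. -/
theorem second_deriv_test_1d {g : ℝ → ℝ} {d : ℝ}
    (hmax : IsLocalMax g 0)
    (hd : ∀ᶠ t in nhds (0:ℝ), DifferentiableAt ℝ g t)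
    (hd2 : HasDerivAt (deriv g) d 0) : d ≤ 0 := by
  by_contra h
  push_neg at h
  have hg0 : deriv g 0 = 0 := hmax.deriv_eq_zero
  have hs : Tendsto (fun t => deriv g t / t) (𝓝[≠] 0) (𝓝 d) := by
    have := hasDerivAt_iff_tendsto_slope.1 hd2
    have heq : slope (deriv g) 0 = fun t => deriv g t / t := by
      funext t; simp [slope_def_field, hg0]
    rwa [heq] at this
  have hpos : ∀ᶠ t in 𝓝[≠] (0:ℝ), 0 < deriv g t / t :=
    hs.eventually (eventually_gt_nhds h)
  have hpos' : ∀ᶠ t in 𝓝[>] (0:ℝ), 0 < deriv g t := by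
    have hmono := nhdsWithin_mono (0:ℝ) (fun t (ht : t ∈ Ioi 0) => (ne_of_gt ht : t ≠ 0))
    filter_upwards [hmono hpos, self_mem_nhdsWithin] with t h1 (h2 : 0 < t)
    by_contra hng
    push_neg at hng
    nlinarith [div_nonpos_of_nonpos_of_nonneg hng h2.le]
  obtain ⟨b, hb, hball⟩ :=
    (nhdsGT_basis_of_exists_gt (⟨1, zero_lt_one⟩ : ∃ b, (0:ℝ) < b)).eventually_iff.1 hpos'
  obtain ⟨ε, hε, hballd⟩ := Metric.eventually_nhds_iff_ball.1 hd
  set b' := min b ε / 2 with hb'def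
  have hb'0 : 0 < b' := by positivity
  have hb'b : b' < b := by
    have := min_le_left b ε; nlinarith [lt_min hb hε]
  have hb'ε : b' < ε := by
    have := min_le_right b ε; nlinarith [lt_min hb hε]
  have hsub : Icc (0:ℝ) b' ⊆ Metric.ball 0 ε := by
    intro t ht
    simp only [Metric.mem_ball, Real.dist_eq, sub_zero]
    rw [abs_of_nonneg ht.1]; exact lt_of_le_of_lt ht.2 hb'ε
  have hmono : StrictMonoOn g (Icc 0 b') := by
    apply strictMonoOn_of_deriv_pos (convex_Icc _ _)
    · exact fun t ht => (hballd t (hsub ht)).continuousAt.continuousWithinAt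
    · intro t ht
      rw [interior_Icc] at ht
      exact hball ⟨ht.1, lt_trans ht.2 hb'b⟩
  obtain ⟨δ, hδ, hballm⟩ := Metric.eventually_nhds_iff_ball.1 (hmax : ∀ᶠ t in 𝓝 (0:ℝ), g t ≤ g 0)
  set t := min b' (δ/2) with htdef
  have ht0 : 0 < t := by positivity
  have h1 : g t ≤ g 0 := by
    apply hballm
    simp only [Metric.mem_ball, Real.dist_eq, sub_zero]
    rw [abs_of_pos ht0]
    calc t ≤ δ/2 := min_le_right _ _
    _ < δ := by linarith
  have h2 : g 0 < g t :=
    hmono (left_mem_Icc.2 hb'0.le) ⟨ht0.le, min_le_left _ _⟩ ht0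
  linarith

/-- Second-derivative data: `f` differentiable near `x`, and `fderiv f` has derivative `Q` at x. -/
structure D2 (f : F → ℝ) (x : F) (Q : F →L[ℝ] F →L[ℝ] ℝ) : Prop where
  diff : ∀ᶠ y in nhds x, DifferentiableAt ℝ f y
  hQ : HasFDerivAt (fderiv ℝ f) Q x

theorem D2.sub {f g : F → ℝ} {x : F} {Qf Qg} (hf : D2 f x Qf) (hg : D2 g x Qg) :
    D2 (fun y => f y - g y) x (Qf - Qg) := by
  refine ⟨?_, ?_⟩
  · filter_upwards [hf.diff, hg.diff] with y h1 h2 using h1.sub h2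
  · have he : (fun y => fderiv ℝ f y - fderiv ℝ g y) =ᶠ[nhds x]
        fderiv ℝ (fun y => f y - g y) := by
      filter_upwards [hf.diff, hg.diff] with y h1 h2 using (fderiv_sub h1 h2).symm
    exact (hf.hQ.sub hg.hQ).congr_of_eventuallyEq he.symm

theorem D2.add {f g : F → ℝ} {x : F} {Qf Qg} (hf : D2 f x Qf) (hg : D2 g x Qg) :
    D2 (fun y => f y + g y) x (Qf + Qg) := by
  refine ⟨?_, ?_⟩
  · filter_upwards [hf.diff, hg.diff] with y h1 h2 using h1.add h2
  · have he : (fun y => fderiv ℝ f y + fderiv ℝ g y) =ᶠ[nhds x]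
        fderiv ℝ (fun y => f y + g y) := by
      filter_upwards [hf.diff, hg.diff] with y h1 h2 using (fderiv_add h1 h2).symm
    exact (hf.hQ.add hg.hQ).congr_of_eventuallyEq he.symm

theorem D2.const_smul {f : F → ℝ} {x : F} {Qf} (hf : D2 f x Qf) (c : ℝ) :
    D2 (fun y => c * f y) x (c • Qf) := by
  refine ⟨?_, ?_⟩
  · filter_upwards [hf.diff] with y h1 using h1.const_mul c
  · have he : (fun y => c • fderiv ℝ f y) =ᶠ[nhds x]
        fderiv ℝ (fun y => c * f y) := by
      filter_upwards [hf.diff] with y h1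
      rw [fderiv_const_mul h1 c]
    exact (hf.hQ.const_smul c).congr_of_eventuallyEq he.symm

theorem D2.const_add {f : F → ℝ} {x : F} {Qf} (hf : D2 f x Qf) (c : ℝ) :
    D2 (fun y => c + f y) x Qf := by
  refine ⟨?_, ?_⟩
  · filter_upwards [hf.diff] with y h1 using (differentiableAt_const c).add h1
  · have he : (fun y => fderiv ℝ f y) =ᶠ[nhds x]
        fderiv ℝ (fun y => c + f y) := by
      filter_upwards [hf.diff] with y h1
      rw [fderiv_const_add]
    exact hf.hQ.congr_of_eventuallyEq he.symm

/-- Second derivative test at an interior local maximum. -/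
theorem D2.localMax_nonpos {f : F → ℝ} {x₀ : F} {Q : F →L[ℝ] F →L[ℝ] ℝ}
    (hf : D2 f x₀ Q) (hmax : IsLocalMax f x₀) (v : F) : Q v v ≤ 0 := by
  set ℓ : ℝ → F := fun t => x₀ + t • v with hℓdef
  have hℓc : Continuous ℓ := by continuity
  have hℓd : ∀ t : ℝ, HasDerivAt ℓ v t := by
    intro t
    simpa [hℓdef] using ((hasDerivAt_id t).smul_const v).const_add x₀
  have hℓ0 : ℓ 0 = x₀ := by simp [hℓdef]
  have htend : Tendsto ℓ (𝓝 0) (𝓝 x₀) := by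
    rw [← hℓ0]; exact hℓc.continuousAt
  set g : ℝ → ℝ := fun t => f (ℓ t) with hgdef
  have hgmax : IsLocalMax g 0 := by
    have := htend.eventually (hmax : ∀ᶠ y in 𝓝 x₀, f y ≤ f x₀)
    filter_upwards [this] with t ht
    simpa [hgdef, hℓ0] using ht
  have hdiffev : ∀ᶠ t in 𝓝 (0:ℝ), DifferentiableAt ℝ f (ℓ t) := htend.eventually hf.diff
  have hgd : ∀ᶠ t in 𝓝 (0:ℝ), DifferentiableAt ℝ g t := by
    filter_upwards [hdiffev] with t ht
    exact (ht.hasFDerivAt.comp_hasDerivAt t (hℓd t)).differentiableAt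
  have hderiv_eq : (deriv g) =ᶠ[𝓝 (0:ℝ)] fun t => fderiv ℝ f (ℓ t) v := by
    filter_upwards [hdiffev] with t ht
    exact (ht.hasFDerivAt.comp_hasDerivAt t (hℓd t)).deriv
  have hQ0 : HasFDerivAt (fderiv ℝ f) Q (ℓ 0) := by rw [hℓ0]; exact hf.hQ
  have hcomp : HasDerivAt (fun t => fderiv ℝ f (ℓ t)) (Q v) 0 :=
    hQ0.comp_hasDerivAt 0 (hℓd 0)
  have happ : HasDerivAt (fun t => fderiv ℝ f (ℓ t) v) (Q v v) 0 := by
    have := ((ContinuousLinearMap.apply ℝ ℝ v).hasFDerivAt).comp_hasDerivAt 0 hcomp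
    simpa [Function.comp_def] using this
  have hd2 : HasDerivAt (deriv g) (Q v v) 0 := happ.congr_of_eventuallyEq hderiv_eq
  exact second_deriv_test_1d hgmax hgd hd2

/-- The inner product as a bilinear continuous linear map over `ℝ`. -/
noncomputable def Msl : F →L[ℝ] F →L[ℝ] ℝ := innerSL ℝ

theorem hasFDerivAt_q (x : F) :
    HasFDerivAt (fun y : F => ⟪y, y⟫) ((2:ℝ) • Msl x) x := by
  have h := (hasStrictFDerivAt_norm_sq x).hasFDerivAt
  have he : (fun y : F => ⟪y, y⟫) = fun y : F => ‖y‖ ^ 2 := by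
    funext y; exact real_inner_self_eq_norm_sq y
  rw [he]
  convert h using 1
  ext y
  simp [Msl, two_smul, innerSL_apply_apply]
  rfl

theorem D2_q (x : F) : D2 (fun y : F => ⟪y, y⟫) x ((2:ℝ) • Msl) := by
  refine ⟨Eventually.of_forall fun y => (hasFDerivAt_q y).differentiableAt, ?_⟩
  have he : fderiv ℝ (fun y : F => ⟪y, y⟫) = fun y => ((2:ℝ) • Msl) y := by
    funext y
    rw [(hasFDerivAt_q y).fderiv]
    simp
  rw [he]
  exact ((2:ℝ) • (Msl : F →L[ℝ] F →L[ℝ] ℝ)).hasFDerivAt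

variable (p : ℝ)

theorem inner_self_pos' {x : F} (hx : x ≠ 0) : (0:ℝ) < ⟪x, x⟫ := by
  rw [real_inner_self_eq_norm_sq]
  have := norm_pos_iff.2 hx
  positivity

noncomputable def sfun (p : ℝ) (y : F) : ℝ := 2 * (p * ⟪y, y⟫ ^ (p - 1))

theorem hasFDerivAt_phi {x : F} (hx : x ≠ 0) :
    HasFDerivAt (fun y : F => ⟪y, y⟫ ^ p) ((sfun p x) • Msl x) x := by
  have hqx : (0:ℝ) < ⟪x, x⟫ := inner_self_pos' hx
  have hg : HasDerivAt (fun t : ℝ => t ^ p) (p * ⟪x, x⟫ ^ (p - 1)) ⟪x, x⟫ :=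
    Real.hasDerivAt_rpow_const (Or.inl hqx.ne')
  have h2 := HasDerivAt.comp_hasFDerivAt (f := fun y : F => ⟪y, y⟫) x hg (hasFDerivAt_q x)
  have h3 : (sfun p x) • Msl (F := F) x = (p * ⟪x, x⟫ ^ (p-1)) • ((2:ℝ) • Msl x) := by
    rw [smul_smul]
    congr 1
    simp [sfun]
    ring
  rw [h3]
  exact h2

theorem hasFDerivAt_sfun {x : F} (hx : x ≠ 0) :
    HasFDerivAt (sfun (F := F) p)
      ((2 * (p * ((p-1) * ⟪x, x⟫ ^ (p - 2)))) • ((2:ℝ) • Msl x)) x := by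
  have hqx : (0:ℝ) < ⟪x, x⟫ := inner_self_pos' hx
  have hg : HasDerivAt (fun t : ℝ => 2 * (p * t ^ (p-1)))
      (2 * (p * ((p-1) * ⟪x, x⟫ ^ (p - 1 - 1)))) ⟪x, x⟫ := by
    have h0 : HasDerivAt (fun t : ℝ => t ^ (p-1)) ((p-1) * ⟪x, x⟫ ^ (p - 1 - 1)) ⟪x, x⟫ :=
      Real.hasDerivAt_rpow_const (Or.inl hqx.ne')
    have h1 := (h0.const_mul p).const_mul 2
    convert h1 using 1
  have h2 := HasDerivAt.comp_hasFDerivAt (f := fun y : F => ⟪y, y⟫) x hg (hasFDerivAt_q x)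
  have h3 : p - 1 - 1 = p - 2 := by ring
  rw [h3] at h2
  exact h2

/-- Second derivative data for `y ↦ ⟪y,y⟫ ^ p` at `x ≠ 0`. -/
theorem D2_phi {x : F} (hx : x ≠ 0) :
    D2 (fun y : F => ⟪y, y⟫ ^ p) x
      ((sfun p x) • Msl +
        ((2 * (p * ((p-1) * ⟪x, x⟫ ^ (p - 2)))) • ((2:ℝ) • Msl x)).smulRight (Msl x)) := by
  have hopen : ∀ᶠ y in nhds x, y ≠ (0:F) :=
    IsOpen.eventually_mem (isOpen_compl_singleton) hx
  refine ⟨?_, ?_⟩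
  · filter_upwards [hopen] with y hy using (hasFDerivAt_phi p hy).differentiableAt
  · have hsmul : HasFDerivAt (fun y => (sfun p y) • Msl (F := F) y)
        ((sfun p x) • (Msl : F →L[ℝ] F →L[ℝ] ℝ) +
          ((2 * (p * ((p-1) * ⟪x, x⟫ ^ (p - 2)))) • ((2:ℝ) • Msl x)).smulRight (Msl x)) x :=
      (hasFDerivAt_sfun p hx).smul (Msl (F := F)).hasFDerivAt
    apply hsmul.congr_of_eventuallyEq
    filter_upwards [hopen] with y hy
    exact (hasFDerivAt_phi p hy).fderiv

end Aux

section Euclid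
open Filter Set Topology RealInnerProductSpace

variable {n : ℕ}
local notation "E" => EuclideanSpace ℝ (Fin n)

theorem laplacian_eq_sum {f : E → ℝ} {x : E} {Q : E →L[ℝ] E →L[ℝ] ℝ}
    (h : D2 f x Q) :
    laplacian f x = ∑ i : Fin n, Q (EuclideanSpace.single i (1:ℝ)) (EuclideanSpace.single i 1) := by
  unfold laplacian
  refine Finset.sum_congr rfl fun i _ => ?_
  rw [iteratedFDeriv_two_apply, h.hQ.fderiv]
  simp

theorem sum_inner_single (x : E) :
    ∑ i : Fin n, (⟪x, EuclideanSpace.single i (1:ℝ)⟫ * ⟪x, EuclideanSpace.single i (1:ℝ)⟫)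
      = ⟪x, x⟫ := by
  simp only [EuclideanSpace.inner_single_right, RCLike.inner_apply, conj_trivial, one_mul]
  rw [real_inner_self_eq_norm_sq, EuclideanSpace.norm_eq]
  rw [Real.sq_sqrt (by positivity)]
  refine Finset.sum_congr rfl fun i _ => ?_
  rw [sq, Real.norm_eq_abs, ← abs_mul, abs_mul_self]

theorem inner_single_self (i : Fin n) :
    ⟪(EuclideanSpace.single i (1:ℝ)), EuclideanSpace.single i (1:ℝ)⟫ = 1 := by
  simp [EuclideanSpace.inner_single_right]

/-- The basis-sum of the second derivative of `y ↦ ⟪y,y⟫` is `2n`. -/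
theorem sum_Q_q :
    ∑ i : Fin n, ((2:ℝ) • Msl (F := E)) (EuclideanSpace.single i (1:ℝ))
      (EuclideanSpace.single i 1) = 2 * n := by
  have : ∀ i : Fin n, ((2:ℝ) • Msl (F := E)) (EuclideanSpace.single i (1:ℝ))
      (EuclideanSpace.single i 1) = 2 := by
    intro i
    simp only [ContinuousLinearMap.smul_apply, ContinuousLinearMap.coe_smul', Pi.smul_apply,
      smul_eq_mul]
    rw [show (Msl (F := E)) (EuclideanSpace.single i (1:ℝ)) (EuclideanSpace.single i 1)
        = ⟪(EuclideanSpace.single i (1:ℝ)), EuclideanSpace.single i (1:ℝ)⟫ from rfl]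
    rw [inner_single_self]; ring
  rw [Finset.sum_congr rfl fun i _ => this i]
  simp [mul_comm]

/-- The basis-sum of the second derivative of `y ↦ ⟪y,y⟫ ^ p` vanishes for harmonic exponent. -/
theorem sum_Q_phi {p : ℝ} {x : E} (hx : x ≠ 0) (hp : 2 * (n:ℝ) * p + 4 * p * (p - 1) = 0) :
    ∑ i : Fin n, ((sfun p x) • Msl (F := E) +
        ((2 * (p * ((p-1) * ⟪x, x⟫ ^ (p - 2)))) • ((2:ℝ) • Msl x)).smulRight (Msl x))
      (EuclideanSpace.single i (1:ℝ)) (EuclideanSpace.single i 1) = 0 := by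
  have hqx : (0:ℝ) < ⟪x, x⟫ := inner_self_pos' hx
  have hterm : ∀ i : Fin n, ((sfun p x) • Msl (F := E) +
        ((2 * (p * ((p-1) * ⟪x, x⟫ ^ (p - 2)))) • ((2:ℝ) • Msl x)).smulRight (Msl x))
      (EuclideanSpace.single i (1:ℝ)) (EuclideanSpace.single i 1)
      = sfun p x + (2 * (p * ((p-1) * ⟪x, x⟫ ^ (p - 2)))) * 2 *
          (⟪x, EuclideanSpace.single i (1:ℝ)⟫ * ⟪x, EuclideanSpace.single i 1⟫) := by
    intro i
    simp only [ContinuousLinearMap.add_apply, ContinuousLinearMap.smul_apply,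
      ContinuousLinearMap.coe_smul', Pi.smul_apply, ContinuousLinearMap.smulRight_apply,
      smul_eq_mul]
    rw [show (Msl (F := E)) (EuclideanSpace.single i (1:ℝ)) (EuclideanSpace.single i 1)
        = ⟪(EuclideanSpace.single i (1:ℝ)), EuclideanSpace.single i (1:ℝ)⟫ from rfl,
      inner_single_self]
    rw [show (Msl (F := E)) x (EuclideanSpace.single i (1:ℝ))
        = ⟪x, EuclideanSpace.single i (1:ℝ)⟫ from rfl]
    ring
  rw [Finset.sum_congr rfl fun i _ => hterm i, Finset.sum_add_distrib, Finset.sum_const,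
    ← Finset.mul_sum, sum_inner_single]
  simp only [Finset.card_univ, Fintype.card_fin, nsmul_eq_mul]
  have ht : ⟪x, x⟫ ^ (p - 2) * ⟪x, x⟫ = ⟪x, x⟫ ^ (p - 1) := by
    nth_rewrite 2 [← Real.rpow_one ⟪x, x⟫]
    rw [← Real.rpow_add hqx]
    ring_nf
  unfold sfun
  rw [show (2:ℝ) * (p * ((p-1) * ⟪x, x⟫ ^ (p - 2))) * 2 * ⟪x, x⟫
      = 4*p*(p-1)*(⟪x, x⟫ ^ (p - 2) * ⟪x, x⟫) from by ring, ht]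
  linear_combination (⟪x, x⟫ ^ (p - 1)) * hp

/-- Maximum principle on a closed annulus: a function that is "harmonic" (in the `D2`,
basis-trace sense) on the open annulus and continuous up to the boundary is bounded by
its boundary maximum. -/
theorem max_principle (hn : 1 ≤ n) {R S : ℝ} (hR : 0 < R) (hRS : R < S)
    {v : EuclideanSpace ℝ (Fin n) → ℝ}
    (hcont : ContinuousOn v {y : E | R ≤ ‖y‖ ∧ ‖y‖ ≤ S})
    (hharm : ∀ y : E, R < ‖y‖ → ‖y‖ < S → ∃ Q : E →L[ℝ] E →L[ℝ] ℝ, D2 v y Q ∧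
      ∑ i : Fin n, Q (EuclideanSpace.single i (1:ℝ)) (EuclideanSpace.single i 1) = 0)
    {m : ℝ} (hbound : ∀ y : E, ‖y‖ = R ∨ ‖y‖ = S → v y ≤ m) :
    ∀ x : E, R ≤ ‖x‖ → ‖x‖ ≤ S → v x ≤ m := by
  intro x hx1 hx2
  set A : Set E := {y : E | R ≤ ‖y‖ ∧ ‖y‖ ≤ S} with hAdef
  have hxA : x ∈ A := ⟨hx1, hx2⟩
  have hS0 : 0 < S := hR.trans hRS
  have hAclosed : IsClosed A := by
    have : A = (fun y : E => ‖y‖) ⁻¹' (Icc R S) := rfl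
    rw [this]
    exact IsClosed.preimage continuous_norm isClosed_Icc
  have hAcompact : IsCompact A := by
    apply Metric.isCompact_of_isClosed_isBounded hAclosed
    apply Bornology.IsBounded.subset (Metric.isBounded_closedBall (x := (0:E)) (r := S))
    intro y hy
    simpa [Metric.mem_closedBall] using hy.2
  -- it suffices to bound `v x ≤ m + δ S²` for all `δ > 0`
  have key : ∀ δ : ℝ, 0 < δ → v x ≤ m + δ * S ^ 2 := by
    intro δ hδ
    set vδ : E → ℝ := fun y => v y + δ * ⟪y, y⟫ with hvδdef
    have hqc : Continuous fun y : E => ⟪y, y⟫ := continuous_inner.comp (continuous_id.prodMk continuous_id)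
    have hvδc : ContinuousOn vδ A := hcont.add ((hqc.const_smul δ).continuousOn)
    obtain ⟨z, hzA, hz⟩ := hAcompact.exists_isMaxOn ⟨x, hxA⟩ hvδc
    have hzin : R ≤ ‖z‖ ∧ ‖z‖ ≤ S := hzA
    have hboundary : ‖z‖ = R ∨ ‖z‖ = S := by
      by_contra hc
      push_neg at hc
      have h1 : R < ‖z‖ := lt_of_le_of_ne hzin.1 (Ne.symm hc.1)
      have h2 : ‖z‖ < S := lt_of_le_of_ne hzin.2 hc.2
      -- interior local max: contradiction with positive laplacian of vδ
      obtain ⟨Q, hQ, hQsum⟩ := hharm z h1 h2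
      have hU : IsOpen {y : E | R < ‖y‖ ∧ ‖y‖ < S} := by
        have : {y : E | R < ‖y‖ ∧ ‖y‖ < S} = (fun y : E => ‖y‖) ⁻¹' (Ioo R S) := rfl
        rw [this]
        exact IsOpen.preimage continuous_norm isOpen_Ioo
      have hmemnhds : A ∈ nhds z := by
        apply Filter.mem_of_superset (hU.mem_nhds ⟨h1, h2⟩)
        exact fun y hy => ⟨hy.1.le, hy.2.le⟩
      have hlocmax : IsLocalMax vδ z := by
        filter_upwards [hmemnhds] with y hy
        exact hz hy
      have hD2 : D2 vδ z (Q + δ • ((2:ℝ) • Msl)) := hQ.add ((D2_q z).const_smul δ)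
      have hsum : ∑ i : Fin n, (Q + δ • ((2:ℝ) • Msl (F := E)))
          (EuclideanSpace.single i (1:ℝ)) (EuclideanSpace.single i 1) = δ * (2 * n) := by
        have hq := sum_Q_q (n := n)
        simp only [ContinuousLinearMap.smul_apply, ContinuousLinearMap.coe_smul',
          Pi.smul_apply, smul_eq_mul] at hq
        simp only [ContinuousLinearMap.add_apply, Finset.sum_add_distrib, hQsum, zero_add,
          ContinuousLinearMap.smul_apply, ContinuousLinearMap.coe_smul', Pi.smul_apply,
          smul_eq_mul]
        rw [← Finset.mul_sum, hq]
      have hle : ∑ i : Fin n, (Q + δ • ((2:ℝ) • Msl (F := E)))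
          (EuclideanSpace.single i (1:ℝ)) (EuclideanSpace.single i 1) ≤ 0 :=
        Finset.sum_nonpos fun i _ => hD2.localMax_nonpos hlocmax _
      rw [hsum] at hle
      have hn' : (0:ℝ) < n := by exact_mod_cast Nat.lt_of_lt_of_le Nat.zero_lt_one hn
      nlinarith
    -- boundary case: conclude
    have hvx : v x ≤ vδ x := by
      have : (0:ℝ) ≤ δ * ⟪x, x⟫ := mul_nonneg hδ.le real_inner_self_nonneg
      simp only [hvδdef]; linarith
    have hvz : vδ x ≤ vδ z := hz hxA
    have hvzm : vδ z ≤ m + δ * S ^ 2 := by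
      have h1 : v z ≤ m := hbound z hboundary
      have h2 : ⟪z, z⟫ ≤ S ^ 2 := by
        rw [real_inner_self_eq_norm_sq]
        exact pow_le_pow_left₀ (norm_nonneg z) hzin.2 2
      have := mul_le_mul_of_nonneg_left h2 hδ.le
      simp only [hvδdef]; linarith
    linarith
  -- conclude by letting δ → 0
  by_contra hcon
  push_neg at hcon
  have hS2 : 0 < S ^ 2 := by positivity
  have hδ : 0 < (v x - m) / (2 * S ^ 2) := div_pos (by linarith) (by positivity)
  have hkey := key _ hδ
  have heq : (v x - m) / (2 * S ^ 2) * S ^ 2 = (v x - m) / 2 := by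
    field_simp
  rw [heq] at hkey
  linarith

end Euclid

section Main
open Filter Set Topology RealInnerProductSpace

variable {n : ℕ}
local notation "E" => EuclideanSpace ℝ (Fin n)

theorem stmt8_aux (hn : 3 ≤ n) (R c L : ℝ) (hR : 0 < R)
    (w : EuclideanSpace ℝ (Fin n) → ℝ)
    (hcont : ContinuousOn w {x : EuclideanSpace ℝ (Fin n) | R ≤ ‖x‖})
    (hC2 : ContDiffOn ℝ 2 w {x : EuclideanSpace ℝ (Fin n) | R < ‖x‖})
    (hlap : ∀ x : EuclideanSpace ℝ (Fin n), R < ‖x‖ → laplacian w x = 0)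
    (hbd : ∀ x : EuclideanSpace ℝ (Fin n), ‖x‖ = R → w x = c)
    (hinf : Filter.Tendsto w
      (Filter.comap (fun x : EuclideanSpace ℝ (Fin n) => ‖x‖) Filter.atTop) (nhds L)) :
    ∀ x : EuclideanSpace ℝ (Fin n), R ≤ ‖x‖ →
      w x = L + (c - L) * (R / ‖x‖) ^ ((n : ℝ) - 2) := by
  have hn3 : (3:ℝ) ≤ (n:ℝ) := by exact_mod_cast hn
  set p : ℝ := (2 - (n:ℝ)) / 2 with hpdef
  have hp : 2 * (n:ℝ) * p + 4 * p * (p - 1) = 0 := by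
    rw [hpdef]; ring
  set B : ℝ := (c - L) * R ^ ((n:ℝ) - 2) with hBdef
  set G : E → ℝ := fun y => L + B * ⟪y, y⟫ ^ p with hGdef
  -- value of G in terms of norms
  have hinner_norm : ∀ y : E, ⟪y, y⟫ ^ p = ‖y‖ ^ (2 * p) := by
    intro y
    rw [real_inner_self_eq_norm_sq, Real.rpow_mul (norm_nonneg y)]
    norm_num
  have hGval : ∀ y : E, 0 < ‖y‖ → G y = L + (c - L) * (R / ‖y‖) ^ ((n:ℝ) - 2) := by
    intro y hy
    rw [hGdef]
    simp only
    rw [hinner_norm y, hBdef, Real.div_rpow hR.le (norm_nonneg y)]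
    have h1 : ‖y‖ ^ (2 * p) = (‖y‖ ^ ((n:ℝ) - 2))⁻¹ := by
      rw [show 2 * p = -(((n:ℝ)) - 2) by rw [hpdef]; ring, Real.rpow_neg (norm_nonneg y)]
    rw [h1, div_eq_mul_inv, mul_assoc]
  have hGR : ∀ y : E, ‖y‖ = R → G y = c := by
    intro y hy
    rw [hGval y (hy ▸ hR), hy, div_self hR.ne', Real.one_rpow]
    ring
  -- the difference u
  set u : E → ℝ := fun y => w y - G y with hudef
  have hqc : Continuous fun y : E => ⟪y, y⟫ :=
    continuous_inner.comp (continuous_id.prodMk continuous_id)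
  have hGcont : ContinuousOn G {y : E | R ≤ ‖y‖} := by
    apply ContinuousOn.add continuousOn_const
    apply ContinuousOn.mul continuousOn_const
    intro y hy
    have hy0 : y ≠ 0 := by
      intro h
      rw [h] at hy
      simp only [mem_setOf_eq, norm_zero] at hy
      linarith
    exact (ContinuousAt.comp (f := fun z : E => ⟪z, z⟫) (Real.continuousAt_rpow_const _ p
      (Or.inl (inner_self_pos' hy0).ne')) hqc.continuousAt).continuousWithinAt
  have hucont : ContinuousOn u {y : E | R ≤ ‖y‖} := hcont.sub hGcont
  -- harmonicity data for u on the exterior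
  have hUopen : IsOpen {y : E | R < ‖y‖} := by
    have : {y : E | R < ‖y‖} = (fun y : E => ‖y‖) ⁻¹' (Ioi R) := rfl
    rw [this]; exact IsOpen.preimage continuous_norm isOpen_Ioi
  have hharm : ∀ y : E, R < ‖y‖ → ∃ Q : E →L[ℝ] E →L[ℝ] ℝ, D2 u y Q ∧
      ∑ i : Fin n, Q (EuclideanSpace.single i (1:ℝ)) (EuclideanSpace.single i 1) = 0 := by
    intro y hy
    have hy0 : y ≠ 0 := by
      intro h; rw [h, norm_zero] at hy; linarith
    have hynhds : {z : E | R < ‖z‖} ∈ nhds y := hUopen.mem_nhds hy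
    have hwdiff : ∀ᶠ z in nhds y, DifferentiableAt ℝ w z := by
      filter_upwards [hynhds] with z hz
      exact (hC2.contDiffAt (hUopen.mem_nhds hz)).differentiableAt two_ne_zero
    have hwfd : HasFDerivAt (fderiv ℝ w) (fderiv ℝ (fderiv ℝ w) y) y := by
      have h1 : ContDiffAt ℝ 1 (fderiv ℝ w) y :=
        (hC2.contDiffAt hynhds).fderiv_right (by norm_num)
      exact (h1.differentiableAt one_ne_zero).hasFDerivAt
    have hD2w : D2 w y (fderiv ℝ (fderiv ℝ w) y) := ⟨hwdiff, hwfd⟩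
    have hD2G : D2 G y (B • ((sfun p y) • Msl +
        ((2 * (p * ((p-1) * ⟪y, y⟫ ^ (p - 2)))) • ((2:ℝ) • Msl y)).smulRight (Msl y))) :=
      ((D2_phi p hy0).const_smul B).const_add L
    refine ⟨_, hD2w.sub hD2G, ?_⟩
    have hsumw : ∑ i : Fin n, (fderiv ℝ (fderiv ℝ w) y)
        (EuclideanSpace.single i (1:ℝ)) (EuclideanSpace.single i 1) = 0 := by
      rw [← laplacian_eq_sum hD2w]
      exact hlap y hy
    have hsumφ := sum_Q_phi (p := p) hy0 hp
    simp only [ContinuousLinearMap.sub_apply, Finset.sum_sub_distrib, hsumw,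
      ContinuousLinearMap.smul_apply, ContinuousLinearMap.coe_smul', Pi.smul_apply,
      smul_eq_mul, zero_sub, neg_eq_zero, ← Finset.mul_sum]
    rw [show ∑ i : Fin n, (((sfun p y) • Msl (F := E) +
        ((2 * (p * ((p-1) * ⟪y, y⟫ ^ (p - 2)))) • ((2:ℝ) • Msl y)).smulRight (Msl y)))
        (EuclideanSpace.single i (1:ℝ)) (EuclideanSpace.single i 1) = 0 from hsumφ]
    ring
  -- u tends to 0 at infinity
  have hφtend : Tendsto (fun y : E => ⟪y, y⟫ ^ p)
      (comap (fun y : E => ‖y‖) atTop) (nhds 0) := by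
    have h1 : Tendsto (fun y : E => ‖y‖) (comap (fun y : E => ‖y‖) atTop) atTop :=
      tendsto_comap
    have h2 : Tendsto (fun t : ℝ => t ^ (2 * p)) atTop (nhds 0) := by
      rw [show 2 * p = -(((n:ℝ)) - 2) by rw [hpdef]; ring]
      exact tendsto_rpow_neg_atTop (by linarith)
    have h3 := h2.comp h1
    refine h3.congr fun y => ?_
    exact (hinner_norm y).symm
  have hutend : Tendsto u (comap (fun y : E => ‖y‖) atTop) (nhds 0) := by
    have hGtend : Tendsto G (comap (fun y : E => ‖y‖) atTop) (nhds (L + B * 0)) :=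
      tendsto_const_nhds.add (hφtend.const_mul B)
    have := hinf.sub hGtend
    simpa using this
  -- quantitative form
  have hquant : ∀ ε : ℝ, 0 < ε → ∃ S₀ : ℝ, ∀ y : E, S₀ ≤ ‖y‖ → |u y| ≤ ε := by
    intro ε hε
    have hev0 : ∀ᶠ t in nhds (0:ℝ), |t| ≤ ε := by
      filter_upwards [Metric.closedBall_mem_nhds (0:ℝ) hε] with t ht
      simpa [Real.dist_eq] using ht
    have hev := hutend.eventually hev0
    rw [Filter.eventually_comap] at hev
    rw [Filter.eventually_atTop] at hev
    obtain ⟨S₀, hS₀⟩ := hev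
    exact ⟨S₀, fun y hy => hS₀ ‖y‖ hy y rfl⟩
  -- conclude
  intro x hx
  have hx0 : 0 < ‖x‖ := lt_of_lt_of_le hR hx
  have hux : ∀ ε : ℝ, 0 < ε → |u x| ≤ ε := by
    intro ε hε
    obtain ⟨S₀, hS₀⟩ := hquant ε hε
    set S : ℝ := max (max S₀ ‖x‖) (R + 1) with hSdef
    have hRS : R < S := lt_of_lt_of_le (by linarith) (le_max_right _ _)
    have hxS : ‖x‖ ≤ S := le_trans (le_max_right _ _) (le_max_left _ _)
    have hS₀S : S₀ ≤ S := le_trans (le_max_left _ _) (le_max_left _ _)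
    have hbnd : ∀ y : E, ‖y‖ = R ∨ ‖y‖ = S → u y ≤ ε ∧ -u y ≤ ε := by
      intro y hy
      rcases hy with hy | hy
      · have : u y = 0 := by
          rw [hudef]; simp only
          rw [hbd y hy, hGR y hy]; ring
        rw [this]; constructor <;> linarith
      · have := hS₀ y (hy ▸ hS₀S)
        rw [abs_le] at this
        exact ⟨this.2, by linarith [this.1]⟩
    have hAcont : ContinuousOn u {y : E | R ≤ ‖y‖ ∧ ‖y‖ ≤ S} :=
      hucont.mono fun y hy => hy.1
    have h1 : u x ≤ ε := by
      apply max_principle (by omega) hR hRS hAcont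
        (fun y hy1 _ => hharm y hy1) (fun y hy => (hbnd y hy).1) x hx hxS
    have h2 : -u x ≤ ε := by
      have hharm' : ∀ y : E, R < ‖y‖ → ‖y‖ < S →
          ∃ Q : E →L[ℝ] E →L[ℝ] ℝ, D2 (fun z => (-1:ℝ) * u z) y Q ∧
          ∑ i : Fin n, Q (EuclideanSpace.single i (1:ℝ)) (EuclideanSpace.single i 1) = 0 := by
        intro y hy1 _
        obtain ⟨Q, hQ, hQ0⟩ := hharm y hy1
        refine ⟨(-1:ℝ) • Q, hQ.const_smul (-1), ?_⟩
        simp only [ContinuousLinearMap.smul_apply, ContinuousLinearMap.coe_smul',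
          Pi.smul_apply, smul_eq_mul, ← Finset.mul_sum, hQ0, mul_zero]
      have := max_principle (n := n) (by omega) hR hRS
        ((hAcont.const_smul (-1)).congr fun y _ => by simp [neg_one_mul])
        hharm' (m := ε) (fun y hy => by
          have := (hbnd y hy).2
          simpa [neg_one_mul] using this) x hx hxS
      simpa [neg_one_mul] using this
    rw [abs_le]
    exact ⟨by linarith, h1⟩
  have hu0 : u x = 0 := by
    by_contra h
    have habs : 0 < |u x| := abs_pos.2 h
    have := hux (|u x| / 2) (by linarith)
    linarith
  have : w x = G x := by
    have : w x - G x = 0 := hu0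
    linarith
  rw [this, hGval x hx0]

end Main

/-- Uniqueness for the exterior Dirichlet problem: if `w` is continuous on `{‖x‖ ≥ R}`,
`C²` with vanishing Laplacian on `{‖x‖ > R}`, equals `c` on the sphere `‖x‖ = R`, and tends
to `L` at infinity, then `w(x) = L + (c − L)(R/‖x‖)^{n−2}` on `{‖x‖ ≥ R}`. -/
theorem stmt8 (n : ℕ) (hn : 3 ≤ n) (R c L : ℝ) (hR : 0 < R)
    (w : EuclideanSpace ℝ (Fin n) → ℝ)
    (hcont : ContinuousOn w {x : EuclideanSpace ℝ (Fin n) | R ≤ ‖x‖})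
    (hC2 : ContDiffOn ℝ 2 w {x : EuclideanSpace ℝ (Fin n) | R < ‖x‖})
    (hlap : ∀ x : EuclideanSpace ℝ (Fin n), R < ‖x‖ → laplacian w x = 0)
    (hbd : ∀ x : EuclideanSpace ℝ (Fin n), ‖x‖ = R → w x = c)
    (hinf : Filter.Tendsto w
      (Filter.comap (fun x : EuclideanSpace ℝ (Fin n) => ‖x‖) Filter.atTop) (nhds L)) :
    ∀ x : EuclideanSpace ℝ (Fin n), R ≤ ‖x‖ →
      w x = L + (c - L) * (R / ‖x‖) ^ ((n : ℝ) - 2) := by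
  exact stmt8_aux hn R c L hR w hcont hC2 hlap hbd hinf
end
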